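/- arXiv:1804.07397 — 6 statements merged into one kernel-verified Lean document; each statement's English description precedes it below -/
import Mathlib

section
/- For a prime p > 3, the third power moment of Kloosterman sums satisfies ∑_{u=1}^{p-1} K_u^3 = (p/3)·p^2 + 2p + 1, where (p/3) is the Legendre symbol of p modulo 3. -/
open Finset

noncomputable def ep (p : ℕ) [NeZero p] (z : ZMod p) : ℂ :=
  Complex.exp (2 * Real.pi * Complex.I * (z.val : ℂ) / (p : ℂ))

/-- Kloosterman sum `K_u = ∑_{x ∈ (Z/p)ˣ} e_p(x + u x⁻¹)`. -/
noncomputable def K (p : ℕ) [NeZero p] (u : ℤ) : ℂ :=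
  ∑ x : (ZMod p)ˣ, ep p ((x : ZMod p) + (u : ZMod p) * ((x⁻¹ : (ZMod p)ˣ) : ZMod p))

section Aux

variable {p : ℕ} [Fact p.Prime]

/-- The quadratic character with values in `ℂ`. -/
noncomputable def Qc (p : ℕ) [Fact p.Prime] : MulChar (ZMod p) ℂ :=
  (quadraticChar (ZMod p)).ringHomComp (Int.castRingHom ℂ)

lemma Qc_apply (t : ZMod p) : Qc p t = ((quadraticChar (ZMod p) t : ℤ) : ℂ) := rfl

lemma sum_units_eq (f : ZMod p → ℂ) :
    ∑ x : (ZMod p)ˣ, f (x : ZMod p)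
      = ∑ x ∈ univ.filter (fun x : ZMod p => x ≠ 0), f x := by
  rw [Finset.sum_subtype (univ.filter (fun x : ZMod p => x ≠ 0))
    (p := fun x : ZMod p => x ≠ 0) (by simp) f]
  exact Fintype.sum_equiv unitsEquivNeZero _ _ (fun x => by simp)

lemma cube_sum {α : Type*} (s : Finset α) (f : α → ℂ) :
    (∑ x ∈ s, f x) ^ 3 = ∑ x ∈ s, ∑ y ∈ s, ∑ z ∈ s, f x * f y * f z := by
  rw [pow_succ, pow_two, Finset.sum_mul_sum, Finset.sum_mul]
  refine Finset.sum_congr rfl fun x _ => ?_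
  rw [Finset.sum_mul]
  refine Finset.sum_congr rfl fun y _ => ?_
  rw [Finset.mul_sum]

lemma orth (ψ : AddChar (ZMod p) ℂ) (hψ : ψ.IsPrimitive) (c : ZMod p) :
    ∑ u : ZMod p, ψ (u * c) = if c = 0 then (p : ℂ) else 0 := by
  rw [AddChar.sum_mulShift c hψ, ZMod.card]
  split_ifs <;> simp

lemma sum_psi (ψ : AddChar (ZMod p) ℂ) (hψ : ψ.IsPrimitive) :
    ∑ u : ZMod p, ψ u = 0 := by
  have := orth ψ hψ 1
  simp only [mul_one] at this
  rw [this, if_neg one_ne_zero]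

lemma step1 (ψ : AddChar (ZMod p) ℂ) (hψ : ψ.IsPrimitive) :
    ∑ u : ZMod p, (∑ x ∈ univ.filter (fun x : ZMod p => x ≠ 0), ψ (x + u * x⁻¹)) ^ 3
      = p * ∑ x ∈ univ.filter (fun x : ZMod p => x ≠ 0),
          ∑ y ∈ univ.filter (fun y : ZMod p => y ≠ 0),
          ∑ z ∈ univ.filter (fun z : ZMod p => z ≠ 0),
            if x⁻¹ + y⁻¹ + z⁻¹ = 0 then ψ (x + y + z) else 0 := by
  have key : ∀ u : ZMod p, ∀ x y z : ZMod p,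
      ψ (x + u * x⁻¹) * ψ (y + u * y⁻¹) * ψ (z + u * z⁻¹)
        = ψ (x + y + z) * ψ (u * (x⁻¹ + y⁻¹ + z⁻¹)) := by
    intro u x y z
    rw [← AddChar.map_add_eq_mul, ← AddChar.map_add_eq_mul, ← AddChar.map_add_eq_mul]
    ring_nf
  calc ∑ u : ZMod p, (∑ x ∈ univ.filter (fun x : ZMod p => x ≠ 0), ψ (x + u * x⁻¹)) ^ 3
      = ∑ u : ZMod p, ∑ x ∈ univ.filter (fun x : ZMod p => x ≠ 0),
          ∑ y ∈ univ.filter (fun y : ZMod p => y ≠ 0),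
          ∑ z ∈ univ.filter (fun z : ZMod p => z ≠ 0),
            ψ (x + y + z) * ψ (u * (x⁻¹ + y⁻¹ + z⁻¹)) := by
        refine Finset.sum_congr rfl fun u _ => ?_
        rw [cube_sum]
        exact Finset.sum_congr rfl fun x _ => Finset.sum_congr rfl fun y _ =>
          Finset.sum_congr rfl fun z _ => key u x y z
    _ = ∑ x ∈ univ.filter (fun x : ZMod p => x ≠ 0),
          ∑ y ∈ univ.filter (fun y : ZMod p => y ≠ 0),
          ∑ z ∈ univ.filter (fun z : ZMod p => z ≠ 0),
            ψ (x + y + z) * ∑ u : ZMod p, ψ (u * (x⁻¹ + y⁻¹ + z⁻¹)) := by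
        rw [Finset.sum_comm]
        refine Finset.sum_congr rfl fun x _ => ?_
        rw [Finset.sum_comm]
        refine Finset.sum_congr rfl fun y _ => ?_
        rw [Finset.sum_comm]
        refine Finset.sum_congr rfl fun z _ => ?_
        rw [Finset.mul_sum]
    _ = _ := by
        rw [Finset.mul_sum]
        refine Finset.sum_congr rfl fun x _ => ?_
        rw [Finset.mul_sum]
        refine Finset.sum_congr rfl fun y _ => ?_
        rw [Finset.mul_sum]
        refine Finset.sum_congr rfl fun z _ => ?_
        rw [orth ψ hψ]
        split_ifs <;> ring

lemma step2 (ψ : AddChar (ZMod p) ℂ) {x y : ZMod p} (hx : x ≠ 0) (hy : y ≠ 0) :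
    ∑ z ∈ univ.filter (fun z : ZMod p => z ≠ 0),
        (if x⁻¹ + y⁻¹ + z⁻¹ = 0 then ψ (x + y + z) else 0)
      = if x + y = 0 then 0 else ψ (x + y - (x⁻¹ + y⁻¹)⁻¹) := by
  by_cases hxy : x + y = 0
  · rw [if_pos hxy]
    refine Finset.sum_eq_zero fun z hz => ?_
    rw [Finset.mem_filter] at hz
    rw [if_neg]
    intro h
    have h0 : x⁻¹ + y⁻¹ = 0 := by
      rw [inv_add_inv hx hy, hxy, zero_div]
    rw [h0, zero_add, inv_eq_zero] at h
    exact hz.2 h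
  · rw [if_neg hxy]
    have hinv : x⁻¹ + y⁻¹ ≠ 0 := by
      rw [inv_add_inv hx hy]
      exact div_ne_zero hxy (mul_ne_zero hx hy)
    set z₀ : ZMod p := -(x⁻¹ + y⁻¹)⁻¹ with hz₀def
    have hz₀ : z₀ ≠ 0 := neg_ne_zero.mpr (inv_ne_zero hinv)
    have hcond : ∀ z : ZMod p, z ≠ 0 → (x⁻¹ + y⁻¹ + z⁻¹ = 0 ↔ z = z₀) := by
      intro z hz
      constructor
      · intro h
        have h1 : z⁻¹ = -(x⁻¹ + y⁻¹) := by linear_combination h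
        have h2 := congrArg (·⁻¹) h1
        simp only [inv_inv, inv_neg] at h2
        rw [hz₀def, ← h2]
      · intro h
        rw [h, hz₀def, inv_neg, inv_inv]
        ring
    calc ∑ z ∈ univ.filter (fun z : ZMod p => z ≠ 0),
          (if x⁻¹ + y⁻¹ + z⁻¹ = 0 then ψ (x + y + z) else 0)
        = ∑ z ∈ univ.filter (fun z : ZMod p => z ≠ 0),
          (if z = z₀ then ψ (x + y + z) else 0) := by
          refine Finset.sum_congr rfl fun z hz => ?_
          rw [Finset.mem_filter] at hz
          exact if_congr (hcond z hz.2) rfl rfl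
      _ = ψ (x + y + z₀) := by
          rw [Finset.sum_ite_eq' (univ.filter (fun z : ZMod p => z ≠ 0)) z₀
            (fun z => ψ (x + y + z))]
          rw [if_pos (by simp [hz₀])]
      _ = ψ (x + y - (x⁻¹ + y⁻¹)⁻¹) := by rw [hz₀def, ← sub_eq_add_neg]

lemma Qc_zero : Qc p 0 = 0 := by
  simp [Qc_apply]

lemma Qc_sq_one {a : ZMod p} (ha : a ≠ 0) : Qc p a * Qc p a = 1 := by
  rw [← map_mul, ← pow_two]
  rw [Qc_apply, quadraticChar_sq_one' ha]
  norm_num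

lemma Qc_inv (a : ZMod p) : Qc p a⁻¹ = Qc p a := by
  rcases eq_or_ne a 0 with rfl | ha
  · rw [inv_zero]
  · have h1 : Qc p a * Qc p a⁻¹ = 1 := by
      rw [← map_mul, mul_inv_cancel₀ ha, map_one]
    have h2 : Qc p a * Qc p a = 1 := Qc_sq_one ha
    have hne : Qc p a ≠ 0 := fun h => by simp [h] at h2
    exact mul_left_cancel₀ hne (h1.trans h2.symm)

lemma gauss_shift (ψ : AddChar (ZMod p) ℂ) {a : ZMod p} (ha : a ≠ 0) :
    ∑ t : ZMod p, Qc p t * ψ (a * t) = Qc p a * gaussSum (Qc p) ψ := by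
  have hbij : Function.Bijective (fun u : ZMod p => a⁻¹ * u) :=
    (Equiv.mulLeft₀ a⁻¹ (inv_ne_zero ha)).bijective
  rw [← Fintype.sum_bijective (fun u : ZMod p => a⁻¹ * u) hbij
      (fun u => Qc p a * (Qc p u * ψ u)) (fun t => Qc p t * ψ (a * t)) ?_]
  · rw [← Finset.mul_sum]
    rfl
  · intro u
    rw [map_mul, Qc_inv, ← mul_assoc a a⁻¹ u, mul_inv_cancel₀ ha, one_mul]
    ring

lemma quad_sum (hp : 3 < p) (ψ : AddChar (ZMod p) ℂ) (hψ : ψ.IsPrimitive)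
    {a : ZMod p} (ha : a ≠ 0) :
    ∑ x : ZMod p, ψ (a * x ^ 2) = Qc p a * gaussSum (Qc p) ψ := by
  have hF : ringChar (ZMod p) ≠ 2 := by
    rw [ZMod.ringChar_zmod_n]
    omega
  calc ∑ x : ZMod p, ψ (a * x ^ 2)
      = ∑ x : ZMod p, ∑ t : ZMod p, if x ^ 2 = t then ψ (a * t) else 0 := by
        refine Finset.sum_congr rfl fun x _ => ?_
        rw [Finset.sum_ite_eq univ (x ^ 2) (fun t => ψ (a * t)), if_pos (mem_univ _)]
    _ = ∑ t : ZMod p, ∑ x : ZMod p, if x ^ 2 = t then ψ (a * t) else 0 := Finset.sum_comm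
    _ = ∑ t : ZMod p, ((univ.filter fun x : ZMod p => x ^ 2 = t).card : ℂ) * ψ (a * t) := by
        refine Finset.sum_congr rfl fun t _ => ?_
        rw [← Finset.sum_filter, Finset.sum_const, nsmul_eq_mul]
    _ = ∑ t : ZMod p, (Qc p t + 1) * ψ (a * t) := by
        refine Finset.sum_congr rfl fun t _ => ?_
        have hc := quadraticChar_card_sqrts hF t
        rw [Set.toFinset_setOf] at hc
        congr 1
        rw [Qc_apply]
        rw [show ((#(filter (fun x : ZMod p => x ^ 2 = t) univ) : ℕ) : ℂ)
            = (((#(filter (fun x : ZMod p => x ^ 2 = t) univ) : ℕ) : ℤ) : ℂ) by push_cast; ring,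
          hc]
        push_cast
        ring
    _ = (∑ t : ZMod p, Qc p t * ψ (a * t)) + ∑ t : ZMod p, ψ (a * t) := by
        rw [← Finset.sum_add_distrib]
        exact Finset.sum_congr rfl fun t _ => by ring
    _ = Qc p a * gaussSum (Qc p) ψ := by
        rw [gauss_shift ψ ha]
        have : ∑ t : ZMod p, ψ (a * t) = 0 := by
          have h := orth ψ hψ a
          rw [if_neg ha] at h
          rw [← h]
          exact Finset.sum_congr rfl fun t _ => by rw [mul_comm]
        rw [this, add_zero]

lemma two_ne (hp : 3 < p) : (2 : ZMod p) ≠ 0 := by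
  have : ((2 : ℕ) : ZMod p) ≠ 0 := by
    rw [Ne, ZMod.natCast_eq_zero_iff]
    intro hdvd
    exact absurd (Nat.le_of_dvd two_pos hdvd) (by omega)
  simpa using this

lemma three_ne (hp : 3 < p) : (3 : ZMod p) ≠ 0 := by
  have : ((3 : ℕ) : ZMod p) ≠ 0 := by
    rw [Ne, ZMod.natCast_eq_zero_iff]
    intro hdvd
    exact absurd (Nat.le_of_dvd three_pos hdvd) (by omega)
  simpa using this

lemma four_ne (hp : 3 < p) : (4 : ZMod p) ≠ 0 := by
  have h2 := two_ne hp
  have : (4 : ZMod p) = 2 * 2 := by norm_num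
  rw [this]
  exact mul_ne_zero h2 h2

lemma gauss_complete (hp : 3 < p) (ψ : AddChar (ZMod p) ℂ) (hψ : ψ.IsPrimitive)
    {s : ZMod p} (hs : s ≠ 0) :
    ∑ x : ZMod p, ψ (x ^ 2 * s⁻¹ - x + s)
      = Qc p s * gaussSum (Qc p) ψ * ψ (s * (3 * (4 : ZMod p)⁻¹)) := by
  have h2 := two_ne hp
  have h4 := four_ne hp
  have hbij : Function.Bijective (fun y : ZMod p => y + s * (2 : ZMod p)⁻¹) :=
    (Equiv.addRight (s * (2 : ZMod p)⁻¹)).bijective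
  rw [← Fintype.sum_bijective (fun y : ZMod p => y + s * (2 : ZMod p)⁻¹) hbij
      (fun y => ψ (s⁻¹ * y ^ 2) * ψ (s * (3 * (4 : ZMod p)⁻¹)))
      (fun x => ψ (x ^ 2 * s⁻¹ - x + s)) ?_]
  · rw [← Finset.sum_mul, quad_sum hp ψ hψ (inv_ne_zero hs), Qc_inv]
  · intro y
    rw [← AddChar.map_add_eq_mul]
    congr 1
    have h4' : (4 : ZMod p) = 2 * 2 := by norm_num
    field_simp
    ring

lemma extract2 (f : ZMod p → ℂ) {s : ZMod p} (hs : s ≠ 0) :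
    ∑ x ∈ univ.filter (fun x : ZMod p => x ≠ 0), (if s - x ≠ 0 then f x else 0)
      = (∑ x : ZMod p, f x) - f 0 - f s := by
  rw [Finset.sum_filter]
  have key : ∀ x : ZMod p, (if x ≠ 0 then (if s - x ≠ 0 then f x else 0) else 0)
      = f x - (if x = 0 then f x else 0) - (if x = s then f x else 0) := by
    intro x
    rcases eq_or_ne x 0 with rfl | hx0
    · simp [hs.symm, Ne.symm hs]
    · rcases eq_or_ne x s with rfl | hxs
      · simp [hx0]
      · simp [hx0, hxs, sub_ne_zero, Ne.symm hxs]
  calc ∑ a : ZMod p, (if a ≠ 0 then (if s - a ≠ 0 then f a else 0) else 0)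
      = ∑ x : ZMod p, (f x - (if x = 0 then f x else 0) - (if x = s then f x else 0)) :=
        Finset.sum_congr rfl (fun x _ => key x)
    _ = (∑ x : ZMod p, f x) - f 0 - f s := by
        rw [Finset.sum_sub_distrib, Finset.sum_sub_distrib,
          Finset.sum_ite_eq' univ (0 : ZMod p) f, Finset.sum_ite_eq' univ s f,
          if_pos (mem_univ _), if_pos (mem_univ _)]

lemma field_id (hp : 3 < p) {x s : ZMod p} (hx : x ≠ 0) (hs : s ≠ 0) (hsx : s - x ≠ 0) :
    s - (x⁻¹ + (s - x)⁻¹)⁻¹ = x ^ 2 * s⁻¹ - x + s := by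
  have key : x⁻¹ + (s - x)⁻¹ = s * (x * (s - x))⁻¹ := by
    rw [inv_add_inv hx hsx, show x + (s - x) = s by ring, div_eq_mul_inv]
  rw [key, mul_inv, inv_inv, ← mul_assoc]
  field_simp
  ring

lemma sum_psi_ne (ψ : AddChar (ZMod p) ℂ) (hψ : ψ.IsPrimitive) :
    ∑ s ∈ univ.filter (fun s : ZMod p => s ≠ 0), ψ s = -1 := by
  rw [Finset.filter_ne', Finset.sum_erase_eq_sub (mem_univ (0 : ZMod p)), sum_psi ψ hψ]
  simp

lemma step3 (hp : 3 < p) (ψ : AddChar (ZMod p) ℂ) (hψ : ψ.IsPrimitive) :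
    ∑ x ∈ univ.filter (fun x : ZMod p => x ≠ 0),
      ∑ y ∈ univ.filter (fun y : ZMod p => y ≠ 0),
        (if x + y = 0 then 0 else ψ (x + y - (x⁻¹ + y⁻¹)⁻¹))
      = Qc p (-3) * p + 2 := by
  have h2 := two_ne hp
  have h3 := three_ne hp
  have h4 := four_ne hp
  have hF : ringChar (ZMod p) ≠ 2 := by
    rw [ZMod.ringChar_zmod_n]
    omega
  have hd : (3 * (4 : ZMod p)⁻¹) ≠ 0 := mul_ne_zero h3 (inv_ne_zero h4)
  have hQ4 : Qc p 4 = 1 := by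
    rw [show (4 : ZMod p) = 2 ^ 2 by norm_num, Qc_apply, quadraticChar_sq_one' h2]
    norm_num
  have hQd : Qc p (3 * (4 : ZMod p)⁻¹) = Qc p 3 := by
    rw [map_mul, Qc_inv, hQ4, mul_one]
  have hQne : (Qc p) ≠ 1 :=
    (MulChar.ringHomComp_ne_one_iff Int.cast_injective).mpr (quadraticChar_ne_one hF)
  have hQq : (Qc p).IsQuadratic := (quadraticChar_isQuadratic (ZMod p)).comp _
  have hsq : gaussSum (Qc p) ψ ^ 2 = Qc p (-1) * p := by
    rw [gaussSum_sq hQne hQq hψ, ZMod.card]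
  calc ∑ x ∈ univ.filter (fun x : ZMod p => x ≠ 0),
      ∑ y ∈ univ.filter (fun y : ZMod p => y ≠ 0),
        (if x + y = 0 then 0 else ψ (x + y - (x⁻¹ + y⁻¹)⁻¹))
      = ∑ x ∈ univ.filter (fun x : ZMod p => x ≠ 0), ∑ s : ZMod p,
          (if s - x ≠ 0 then (if s = 0 then 0 else ψ (s - (x⁻¹ + (s - x)⁻¹)⁻¹)) else 0) := by
        refine Finset.sum_congr rfl fun x hx => ?_
        rw [Finset.sum_filter]
        refine (Fintype.sum_bijective (fun s : ZMod p => s - x) (Equiv.subRight x).bijective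
          _ _ (fun s => ?_)).symm
        simp only [show x + (s - x) = s from by ring]
    _ = ∑ s : ZMod p, ∑ x ∈ univ.filter (fun x : ZMod p => x ≠ 0),
          (if s - x ≠ 0 then (if s = 0 then 0 else ψ (s - (x⁻¹ + (s - x)⁻¹)⁻¹)) else 0) :=
        Finset.sum_comm
    _ = ∑ s ∈ univ.filter (fun s : ZMod p => s ≠ 0),
          ∑ x ∈ univ.filter (fun x : ZMod p => x ≠ 0),
            (if s - x ≠ 0 then ψ (x ^ 2 * s⁻¹ - x + s) else 0) := by
        rw [Finset.sum_filter]
        refine Finset.sum_congr rfl fun s _ => ?_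
        rcases eq_or_ne s 0 with rfl | hs
        · simp
        · rw [if_pos hs]
          refine Finset.sum_congr rfl fun x hx => ?_
          rw [Finset.mem_filter] at hx
          rcases eq_or_ne (s - x) 0 with hsx | hsx
          · rw [if_neg (by simp [hsx]), if_neg (by simp [hsx])]
          · rw [if_pos hsx, if_pos hsx, if_neg hs, field_id hp hx.2 hs hsx]
    _ = ∑ s ∈ univ.filter (fun s : ZMod p => s ≠ 0),
          (Qc p s * gaussSum (Qc p) ψ * ψ (s * (3 * (4 : ZMod p)⁻¹)) - ψ s - ψ s) := by
        refine Finset.sum_congr rfl fun s hs => ?_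
        rw [Finset.mem_filter] at hs
        rw [extract2 (fun x => ψ (x ^ 2 * s⁻¹ - x + s)) hs.2]
        rw [gauss_complete hp ψ hψ hs.2]
        congr 2
        · congr 1
          rw [show (0 : ZMod p) ^ 2 * s⁻¹ - 0 + s = s by ring]
        · congr 1
          rw [show s ^ 2 * s⁻¹ - s + s = s ^ 2 * s⁻¹ by ring, sq, mul_assoc,
            mul_inv_cancel₀ hs.2, mul_one]
    _ = Qc p (-3) * p + 2 := by
        rw [Finset.sum_sub_distrib, Finset.sum_sub_distrib, sum_psi_ne ψ hψ]
        have hmain : ∑ s ∈ univ.filter (fun s : ZMod p => s ≠ 0),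
            Qc p s * gaussSum (Qc p) ψ * ψ (s * (3 * (4 : ZMod p)⁻¹))
            = Qc p (-3) * p := by
          have e1 : ∀ s : ZMod p, Qc p s * gaussSum (Qc p) ψ * ψ (s * (3 * (4 : ZMod p)⁻¹))
              = gaussSum (Qc p) ψ * (Qc p s * ψ ((3 * (4 : ZMod p)⁻¹) * s)) := by
            intro s
            rw [mul_comm s (3 * (4 : ZMod p)⁻¹)]
            ring
          rw [Finset.sum_congr rfl fun s _ => e1 s, ← Finset.mul_sum]
          have e2 : ∑ s ∈ univ.filter (fun s : ZMod p => s ≠ 0),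
              Qc p s * ψ ((3 * (4 : ZMod p)⁻¹) * s)
              = ∑ s : ZMod p, Qc p s * ψ ((3 * (4 : ZMod p)⁻¹) * s) := by
            rw [Finset.filter_ne', Finset.sum_erase_eq_sub (mem_univ (0 : ZMod p)),
              Qc_zero, zero_mul, sub_zero]
          rw [e2, gauss_shift ψ hd, hQd, ← mul_assoc, mul_comm (gaussSum (Qc p) ψ) (Qc p 3),
            mul_assoc, ← pow_two, hsq, ← mul_assoc, ← map_mul,
            show (3 : ZMod p) * (-1) = -3 by ring]
        rw [hmain]
        ring

lemma legendre_neg_three (hp : 3 < p) : legendreSym p (-3) = legendreSym 3 p := by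
  haveI : Fact (Nat.Prime 3) := ⟨by norm_num⟩
  have hp2 : p ≠ 2 := by omega
  have hmod : p % 2 = 1 := ((Fact.out : p.Prime).eq_two_or_odd).resolve_left hp2
  rw [show (-3 : ℤ) = -1 * 3 by norm_num, legendreSym.mul, legendreSym.at_neg_one hp2,
    ZMod.χ₄_eq_neg_one_pow hmod,
    legendreSym.quadratic_reciprocity' (p := p) (q := 3) hp2 (by norm_num)]
  norm_num

end Aux

theorem third_moment (p : ℕ) [Fact p.Prime] (hp : 3 < p) :
    ∑ u ∈ Finset.Icc 1 (p - 1), (K p (u : ℤ)) ^ 3 =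
      (legendreSym 3 p : ℂ) * (p : ℂ) ^ 2 + 2 * p + 1 := by
  have hprime : p.Prime := Fact.out
  haveI : NeZero p := ⟨by omega⟩
  have hζroot := Complex.isPrimitiveRoot_exp p (by omega : p ≠ 0)
  have hζ : Complex.exp (2 * Real.pi * Complex.I / p) ^ p = 1 := hζroot.pow_eq_one
  set ψ : AddChar (ZMod p) ℂ := AddChar.zmodChar p hζ with hψdef
  have hψ : ψ.IsPrimitive := AddChar.zmodChar_primitive_of_primitive_root p hζroot
  have hep : ∀ z : ZMod p, ep p z = ψ z := by
    intro z
    rw [hψdef, AddChar.zmodChar_apply, ← Complex.exp_nat_mul]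
    unfold ep
    congr 1
    ring
  set Kz : ZMod p → ℂ :=
    fun u => ∑ x ∈ univ.filter (fun x : ZMod p => x ≠ 0), ψ (x + u * x⁻¹) with hKzdef
  have hK : ∀ u : ℕ, K p (u : ℤ) = Kz ((u : ℕ) : ZMod p) := by
    intro u
    show K p (u : ℤ)
      = ∑ x ∈ univ.filter (fun x : ZMod p => x ≠ 0), ψ (x + ((u : ℕ) : ZMod p) * x⁻¹)
    unfold K
    rw [← sum_units_eq (fun x : ZMod p => ψ (x + ((u : ℕ) : ZMod p) * x⁻¹))]
    refine Finset.sum_congr rfl fun x _ => ?_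
    rw [hep]
    congr 1
    push_cast [Units.val_inv_eq_inv_val]
    ring
  have hKz0 : Kz 0 = -1 := by
    rw [hKzdef]
    simp only [zero_mul, add_zero]
    exact sum_psi_ne ψ hψ
  have hbig : ∑ u ∈ Finset.Icc 1 (p - 1), (K p (u : ℤ)) ^ 3
      = ∑ u ∈ univ.filter (fun u : ZMod p => u ≠ 0), Kz u ^ 3 := by
    refine Finset.sum_nbij' (fun u : ℕ => ((u : ℕ) : ZMod p)) (fun v : ZMod p => v.val)
      ?_ ?_ ?_ ?_ ?_
    · intro a ha
      rw [Finset.mem_Icc] at ha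
      simp only [Finset.mem_filter, mem_univ, true_and]
      rw [Ne, ZMod.natCast_eq_zero_iff]
      intro hdvd
      have := Nat.le_of_dvd (by omega) hdvd
      omega
    · intro b hb
      rw [Finset.mem_filter] at hb
      show b.val ∈ Finset.Icc 1 (p - 1)
      rw [Finset.mem_Icc]
      have h1 : b.val ≠ 0 := fun h => hb.2 ((ZMod.val_eq_zero b).mp h)
      have h2 : b.val < p := ZMod.val_lt b
      refine ⟨by omega, by omega⟩
    · intro a ha
      rw [Finset.mem_Icc] at ha
      show ((a : ZMod p)).val = a
      rw [ZMod.val_natCast]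
      exact Nat.mod_eq_of_lt (by omega)
    · intro b _
      show ((b.val : ℕ) : ZMod p) = b
      exact ZMod.natCast_zmod_val b
    · intro a _
      rw [hK a]
  have hsplit : ∑ u ∈ univ.filter (fun u : ZMod p => u ≠ 0), Kz u ^ 3
      = (∑ u : ZMod p, Kz u ^ 3) + 1 := by
    rw [Finset.filter_ne', Finset.sum_erase_eq_sub (mem_univ (0 : ZMod p)), hKz0]
    ring
  have hA : ∑ u : ZMod p, Kz u ^ 3 = p * (Qc p (-3) * p + 2) := by
    rw [hKzdef]
    rw [step1 ψ hψ]
    congr 1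
    rw [← step3 hp ψ hψ]
    refine Finset.sum_congr rfl fun x hx => Finset.sum_congr rfl fun y hy => ?_
    rw [Finset.mem_filter] at hx hy
    exact step2 ψ hx.2 hy.2
  have hleg : Qc p (-3) = ((legendreSym 3 p : ℤ) : ℂ) := by
    rw [← legendre_neg_three hp]
    rw [show legendreSym p (-3) = quadraticChar (ZMod p) (((-3 : ℤ) : ZMod p)) from rfl]
    rw [Qc_apply]
    congr 2
    push_cast
    ring
  rw [hbig, hsplit, hA, hleg]
  push_cast
  ring
end

section
/- Let p ≥ 5 be prime, f_1(x) = x^2 - 4x and f_9(x) = x^2 - 20x + 64. Then ∑_{x=0}^{p-1} (f_1(x) f_9(x) / p) = -1 - (p/3), where (·/p) is the Legendre symbol mod p and (p/3) the Legendre symbol of p mod 3. -/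
/-!
Since `(x² - 4x)(x² - 20x + 64) = (x - 4)² · x(x - 16)`, the square factor only removes the
term `x = 4`, whose value is `(-48/p) = (-3/p) = (p/3)`. The remaining complete sum
`∑ (x(x - 16)/p)` equals `-1`: for `x ≠ 0` one has `(x(x - 16)/p) = ((1 - 16/x)/p)`, and
`1 - 16/x` runs over all residues except `1`.
-/

open Finset

theorem ZMod.sum_range_natCast {M : Type*} [AddCommMonoid M] (n : ℕ) [NeZero n]
    (f : ZMod n → M) : ∑ x ∈ range n, f x = ∑ x : ZMod n, f x :=
  sum_nbij' (fun x => (x : ZMod n)) ZMod.val (fun _ _ => mem_univ _)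
    (fun y _ => mem_range.mpr y.val_lt) (fun _ hx => ZMod.val_cast_of_lt (mem_range.mp hx))
    (fun y _ => ZMod.natCast_zmod_val y) (fun _ _ => rfl)

section QuadraticChar

variable {F : Type*} [Field F] [Fintype F] [DecidableEq F]

theorem quadraticChar_sum_sq_mul (a : F) (g : F → F) :
    ∑ y, quadraticChar F ((y - a) ^ 2 * g y) =
      ∑ y, quadraticChar F (g y) - quadraticChar F (g a) := by
  rw [Fintype.sum_eq_add_sum_compl a, Fintype.sum_eq_add_sum_compl a (fun y => _)]
  simp only [sub_self, ne_eq, OfNat.ofNat_ne_zero, not_false_eq_true, zero_pow, zero_mul,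
    MulChar.map_zero, zero_add, add_sub_cancel_left]
  refine sum_congr rfl fun y hy => ?_
  rw [map_mul, quadraticChar_sq_one' (sub_ne_zero.mpr (by simpa using hy)), one_mul]

theorem quadraticChar_sum_mul_sub (hF : ringChar F ≠ 2) {b : F} (hb : b ≠ 0) :
    ∑ y, quadraticChar F (y * (y - b)) = -1 := by
  set χ := quadraticChar F
  have hshift : ∑ y, χ (y * (y - b)) + 1 = ∑ y, χ (1 - b * y⁻¹) := by
    rw [Fintype.sum_eq_add_sum_compl 0, Fintype.sum_eq_add_sum_compl 0 (fun y => χ (1 - b * y⁻¹))]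
    simp only [zero_mul, MulChar.map_zero, zero_add, inv_zero, mul_zero, sub_zero, map_one]
    rw [add_comm]
    congr 1
    refine sum_congr rfl fun y hy => ?_
    have hy : y ≠ 0 := by simpa using hy
    rw [show y * (y - b) = y ^ 2 * (1 - b * y⁻¹) by field_simp, map_mul,
      quadraticChar_sq_one' hy, one_mul]
  have haffine : ∑ y, χ (1 - b * y⁻¹) = ∑ w, χ w :=
    Fintype.sum_bijective (fun y => 1 - b * y⁻¹) ((Equiv.subLeft (1 : F)).bijective.comp
      ((mulLeft_bijective₀ b hb).comp inv_involutive.bijective)) _ _ fun _ => rfl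
  rw [haffine, quadraticChar_sum_zero hF] at hshift
  linear_combination hshift

end QuadraticChar

theorem legendreSym.at_neg_three {p : ℕ} [Fact p.Prime] (hp : p ≠ 2) :
    legendreSym p (-3) = legendreSym 3 p := by
  have : Fact (Nat.Prime 3) := ⟨Nat.prime_three⟩
  have hodd : p % 2 = 1 := Nat.odd_iff.mp ((Fact.out : p.Prime).odd_of_ne_two hp)
  rw [show (-3 : ℤ) = -1 * 3 by norm_num, legendreSym.mul, legendreSym.at_neg_one hp,
    ZMod.χ₄_eq_neg_one_pow hodd, legendreSym.quadratic_reciprocity' hp (by norm_num)]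
  norm_num

theorem epsilon_nine (p : ℕ) [Fact p.Prime] (hp : 5 ≤ p) :
    ∑ x ∈ Finset.range p,
      legendreSym p (((x : ℤ) ^ 2 - 4 * x) * ((x : ℤ) ^ 2 - 20 * x + 64)) =
      -1 - legendreSym 3 p := by
  have hp2 : p ≠ 2 := by omega
  have hchar : ringChar (ZMod p) ≠ 2 := by rwa [ZMod.ringChar_zmod_n]
  have h2 : (2 : ZMod p) ≠ 0 := Ring.two_ne_zero hchar
  have h16 : (16 : ZMod p) ≠ 0 := by
    rw [show (16 : ZMod p) = 2 ^ 4 by norm_num]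
    exact pow_ne_zero 4 h2
  have : NeZero p := ⟨by omega⟩
  calc _ = ∑ y : ZMod p, quadraticChar (ZMod p) ((y - 4) ^ 2 * (y * (y - 16))) := by
        rw [← ZMod.sum_range_natCast]
        refine sum_congr rfl fun x _ => ?_
        rw [legendreSym]
        congr 1
        push_cast
        ring
    _ = -1 - quadraticChar (ZMod p) (-3 * (2 ^ 2) ^ 2) := by
        rw [quadraticChar_sum_sq_mul, quadraticChar_sum_mul_sub hchar h16]
        norm_num
    _ = -1 - legendreSym 3 p := by
        rw [map_mul, quadraticChar_sq_one' (pow_ne_zero 2 h2), mul_one,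
          ← legendreSym.at_neg_three hp2, legendreSym]
        push_cast
        rfl
end

section
/- Let p ≥ 5 be prime, f_k(x) = x^2 - 2(k+1)x + (k-1)^2, and ε_k = ∑_{x=0}^{p-1} (f_1(x) f_k(x) / p). Then ∑_{k=1}^{p-1} ε_k = 2 + (p/3). -/
/-!
Over `𝔽_p`, write `χ` for the quadratic character. Since `f_k(x) = (k - (x + 1))² - 4x` and
`∑_y χ(y² - c) = -1` for `c ≠ 0`, summing `ε_k` over all `k ∈ 𝔽_p` gives
`-∑_{x ≠ 0} χ(x(x - 4)) = 1`. On the other hand `f_0(x) = (x - 1)²`, so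
`ε_0 = ∑_{x ≠ 1} χ(x(x - 4)) = -1 - χ(-3)`. Hence `∑_{k ≠ 0} ε_k = 2 + χ(-3)`, and
`χ(-3) = (p/3)` by quadratic reciprocity.
-/

open Finset

/-- `ε_k = ∑_{x=0}^{p-1} (f_1(x) f_k(x) / p)` with
`f_k(x) = x² - 2(k+1)x + (k-1)²`. -/
def eps (p : ℕ) [Fact p.Prime] (k : ℤ) : ℤ :=
  ∑ x ∈ Finset.range p,
    legendreSym p (((x : ℤ) ^ 2 - 4 * x) *
      ((x : ℤ) ^ 2 - 2 * (k + 1) * x + (k - 1) ^ 2))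

namespace EpsilonSum

def f {R : Type*} [CommRing R] (k x : R) : R := x ^ 2 - 2 * (k + 1) * x + (k - 1) ^ 2

section FiniteField

variable {F : Type*} [Field F]

theorem four_ne_zero_of_ringChar_ne_two (hF : ringChar F ≠ 2) : (4 : F) ≠ 0 := by
  simpa [show (4 : F) = 2 * 2 by norm_num] using Ring.two_ne_zero hF

variable [Fintype F] [DecidableEq F]

theorem quadraticChar_sum_mul_sub_one (hF : ringChar F ≠ 2) :
    ∑ x : F, quadraticChar F (x * (x - 1)) = -1 := by
  have hJ := jacobiSum_nontrivial_inv (quadraticChar_ne_one hF)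
  rw [(quadraticChar_isQuadratic F).inv, jacobiSum] at hJ
  calc ∑ x : F, quadraticChar F (x * (x - 1))
      = quadraticChar F (-1) * ∑ x : F, quadraticChar F x * quadraticChar F (1 - x) := by
        rw [mul_sum]
        refine sum_congr rfl fun x _ => ?_
        rw [← map_mul, ← map_mul]
        ring_nf
    _ = -1 := by rw [hJ, mul_neg, ← map_mul]; norm_num

theorem quadraticChar_sum_mul_sub (hF : ringChar F ≠ 2) {d : F} (hd : d ≠ 0) :
    ∑ x : F, quadraticChar F (x * (x - d)) = -1 := by
  rw [← quadraticChar_sum_mul_sub_one hF]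
  refine (Fintype.sum_equiv (Equiv.mulLeft₀ d hd) _ _ fun y => ?_).symm
  rw [Equiv.mulLeft₀_apply, show d * y * (d * y - d) = d ^ 2 * (y * (y - 1)) by ring,
    map_mul _ (d ^ 2), quadraticChar_sq_one' hd, one_mul]

theorem quadraticChar_sum_sq_sub (hF : ringChar F ≠ 2) {d : F} (hd : d ≠ 0) :
    ∑ x : F, quadraticChar F (x ^ 2 - d) = -1 := by
  have hfiber : ∑ x : F, quadraticChar F (x ^ 2 - d)
      = ∑ t : F, (quadraticChar F t + 1) * quadraticChar F (t - d) := by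
    rw [← sum_fiberwise_of_maps_to' (g := fun x : F => x ^ 2) (fun _ _ => mem_univ _)
      (fun t => quadraticChar F (t - d))]
    refine sum_congr rfl fun t _ => ?_
    rw [sum_const, ← quadraticChar_card_sqrts hF t, Set.toFinset_ofPred, nsmul_eq_mul]
  have hshift : ∑ t : F, quadraticChar F (t - d) = 0 := by
    rw [← quadraticChar_sum_zero hF]
    exact Fintype.sum_equiv (Equiv.subRight d) _ _ fun t => rfl
  calc ∑ x : F, quadraticChar F (x ^ 2 - d)
      = ∑ t : F, quadraticChar F (t * (t - d)) + ∑ t : F, quadraticChar F (t - d) := by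
        rw [hfiber, ← sum_add_distrib]
        refine sum_congr rfl fun t _ => ?_
        rw [map_mul]
        ring
    _ = -1 := by rw [quadraticChar_sum_mul_sub hF hd, hshift, add_zero]

def epsField (k : F) : ℤ := ∑ x : F, quadraticChar F (f 1 x * f k x)

theorem sum_quadraticChar_f_of_ne_zero (hF : ringChar F ≠ 2) {x : F} (hx : x ≠ 0) :
    ∑ k : F, quadraticChar F (f k x) = -1 := by
  rw [← quadraticChar_sum_sq_sub hF (mul_ne_zero (four_ne_zero_of_ringChar_ne_two hF) hx)]
  refine Fintype.sum_equiv (Equiv.subRight (x + 1)) _ _ fun k => ?_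
  rw [f, Equiv.subRight_apply]
  ring_nf

theorem sum_epsField (hF : ringChar F ≠ 2) : ∑ k : F, epsField k = 1 := by
  have hx : ∀ x : F, quadraticChar F (f 1 x) * ∑ k : F, quadraticChar F (f k x)
      = -quadraticChar F (x * (x - 4)) := by
    intro x
    rcases eq_or_ne x 0 with rfl | hx
    · simp [f]
    · rw [sum_quadraticChar_f_of_ne_zero hF hx, f]
      ring_nf
  calc ∑ k : F, epsField k
      = ∑ x : F, quadraticChar F (f 1 x) * ∑ k : F, quadraticChar F (f k x) := by
        simp only [epsField, map_mul, mul_sum]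
        exact sum_comm
    _ = 1 := by
        rw [sum_congr rfl fun x _ => hx x, sum_neg_distrib,
          quadraticChar_sum_mul_sub hF (four_ne_zero_of_ringChar_ne_two hF), neg_neg]

theorem epsField_zero (hF : ringChar F ≠ 2) : epsField (0 : F) = -1 - quadraticChar F (-3) := by
  have hsq : ∀ x ∈ univ.erase (1 : F),
      quadraticChar F (f 1 x * f 0 x) = quadraticChar F (x * (x - 4)) := by
    intro x hx
    rw [show f 1 x * f 0 x = x * (x - 4) * (x - 1) ^ 2 by rw [f, f]; ring, map_mul,
      quadraticChar_sq_one' (sub_ne_zero.mpr (ne_of_mem_erase hx)), mul_one]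
  rw [epsField, ← sum_erase (f := fun x => quadraticChar F (f 1 x * f 0 x)) (a := 1) _
      (by rw [show f 0 (1 : F) = 0 by rw [f]; ring, mul_zero, MulChar.map_zero]),
    sum_congr rfl hsq, sum_erase_eq_sub (mem_univ 1),
    quadraticChar_sum_mul_sub hF (four_ne_zero_of_ringChar_ne_two hF)]
  norm_num

end FiniteField

theorem sum_range_natCast_eq_sum_zmod {M : Type*} [AddCommMonoid M] (n : ℕ) [NeZero n]
    (g : ZMod n → M) : ∑ x ∈ range n, g x = ∑ x : ZMod n, g x :=
  sum_nbij' (fun x => x) ZMod.val (fun _ _ => mem_univ _)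
    (fun x _ => mem_range.mpr (ZMod.val_lt x))
    (fun _ hx => ZMod.val_cast_of_lt (mem_range.mp hx)) (fun x _ => ZMod.natCast_zmod_val x)
    (fun _ _ => rfl)

theorem sum_Icc_intCast_eq_sum_erase_zero {M : Type*} [AddCommMonoid M] (n : ℕ) [NeZero n]
    (g : ZMod n → M) : ∑ k ∈ Icc (1 : ℤ) (n - 1), g k = ∑ x ∈ univ.erase 0, g x := by
  have hval : ∀ k ∈ Icc (1 : ℤ) (n - 1), ((k : ZMod n).val : ℤ) = k := fun k hk => by
    rw [mem_Icc] at hk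
    rw [ZMod.val_intCast, Int.emod_eq_of_lt (by omega) (by omega)]
  refine sum_nbij' (fun k => k) (fun x => (x.val : ℤ)) (fun k hk => ?_) (fun x hx => ?_)
    hval (fun x _ => ?_) (fun _ _ => rfl)
  · refine mem_erase.mpr ⟨fun h0 => ?_, mem_univ _⟩
    have := hval k hk
    rw [h0, ZMod.val_zero] at this
    rw [mem_Icc] at hk
    omega
  · have hx0 : x.val ≠ 0 := (ZMod.val_ne_zero x).mpr (ne_of_mem_erase hx)
    have := ZMod.val_lt x
    rw [mem_Icc]
    omega
  · simp

theorem quadraticChar_neg_three (p : ℕ) [Fact p.Prime] (hp : p ≠ 2) :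
    quadraticChar (ZMod p) (-3) = legendreSym 3 p := by
  have : Fact (Nat.Prime 3) := ⟨Nat.prime_three⟩
  have hodd : p % 2 = 1 := (Fact.out : p.Prime).eq_two_or_odd.resolve_left hp
  have hrec : legendreSym 3 p = (-1) ^ (p / 2) * legendreSym p 3 := by
    simpa using legendreSym.quadratic_reciprocity' hp (q := 3) (by norm_num)
  calc quadraticChar (ZMod p) (-3) = legendreSym p (-1) * legendreSym p 3 := by
        rw [← legendreSym.mul, legendreSym]; norm_num
    _ = legendreSym 3 p := by
        rw [hrec, legendreSym.at_neg_one hp, ZMod.χ₄_eq_neg_one_pow hodd]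

theorem eps_eq_epsField (p : ℕ) [Fact p.Prime] (k : ℤ) : eps p k = epsField (k : ZMod p) := by
  rw [eps, epsField, ← sum_range_natCast_eq_sum_zmod p]
  refine sum_congr rfl fun x _ => ?_
  rw [legendreSym, f, f]
  push_cast
  ring_nf

end EpsilonSum

open EpsilonSum

theorem epsilon_sum_full (p : ℕ) [Fact p.Prime] (hp : 5 ≤ p) :
    ∑ k ∈ Finset.Icc (1 : ℤ) ((p : ℤ) - 1), eps p k = 2 + legendreSym 3 p := by
  have hF : ringChar (ZMod p) ≠ 2 := by rw [ZMod.ringChar_zmod_n]; omega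
  calc ∑ k ∈ Icc (1 : ℤ) (p - 1), eps p k = ∑ κ ∈ univ.erase 0, epsField κ := by
        simp only [eps_eq_epsField]
        exact sum_Icc_intCast_eq_sum_erase_zero p epsField
    _ = ∑ κ : ZMod p, epsField κ - epsField 0 := sum_erase_eq_sub (mem_univ 0)
    _ = 2 + quadraticChar (ZMod p) (-3) := by rw [sum_epsField hF, epsField_zero hF]; ring
    _ = 2 + legendreSym 3 p := by rw [quadraticChar_neg_three p (by omega)]
end

section
/- Let p ≥ 5 be prime, f_k(x) = x^2 - 2(k+1)x + (k-1)^2, and ε_k = ∑_{x=0}^{p-1} (f_1(x) f_k(x) / p). Then ∑_{k=2}^{p-1} ε_k = 4 + (p/3) - p. -/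
open Finset

/-!
Over `F = 𝔽_p` with `χ` the quadratic character, `f_t(x)` is symmetric in `x` and `t`, and as a
quadratic in `t` it has discriminant `16x`. A quadratic character sum of a monic quadratic with
nonzero discriminant is `-1`, so summing `ε_t` over all `t ∈ 𝔽_p` gives
`-∑ₓ χ(x² - 4x) = 1`. The two missing terms are explicit: `f_0(x) = (x - 1)²` gives
`ε_0 = -1 - χ(-3)`, and `f_1²` is a square with two roots, giving `ε_1 = p - 2`. Finally
`χ(-3) = (p/3)` by quadratic reciprocity.
-/

section QuadraticCharSums

variable {F : Type*} [Field F] [Fintype F] [DecidableEq F]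

lemma quadraticChar_mul_self {a : F} (ha : a ≠ 0) :
    quadraticChar F a * quadraticChar F a = 1 := by
  rw [← pow_two, quadraticChar_sq_one ha]

/-- The substitution `x = -b y` turns the sum into `χ(-1) J(χ, χ)`, and `J(χ, χ) = -χ(-1)`. -/
lemma quadraticChar_sum_mul_add (hF : ringChar F ≠ 2) {b : F} (hb : b ≠ 0) :
    ∑ x : F, quadraticChar F x * quadraticChar F (x + b) = -1 := by
  set χ := quadraticChar F
  have hJ : jacobiSum χ χ = -χ (-1) := by
    simpa only [(quadraticChar_isQuadratic F).inv] using
      jacobiSum_nontrivial_inv (quadraticChar_ne_one hF)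
  calc ∑ x : F, χ x * χ (x + b) = ∑ y : F, χ (-b * y) * χ (-b * y + b) :=
        (Fintype.sum_equiv (Equiv.mulLeft₀ (-b) (neg_ne_zero.mpr hb)) _ _ fun _ => rfl).symm
    _ = ∑ y : F, χ (-1) * (χ b * χ b) * (χ y * χ (1 - y)) := by
        refine sum_congr rfl fun y _ => ?_
        rw [show -b * y + b = b * (1 - y) by ring, show -b * y = -1 * b * y by ring]
        simp only [map_mul]
        ring
    _ = χ (-1) * jacobiSum χ χ := by
        rw [quadraticChar_mul_self hb, mul_one, ← mul_sum]
        rfl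
    _ = -1 := by rw [hJ, mul_neg, quadraticChar_mul_self (neg_ne_zero.mpr one_ne_zero)]

/-- Group `y` by `a = y²`: the fibre over `a` has `χ(a) + 1` points. -/
lemma quadraticChar_sum_sq_sub (hF : ringChar F ≠ 2) {d : F} (hd : d ≠ 0) :
    ∑ y : F, quadraticChar F (y ^ 2 - d) = -1 := by
  set χ := quadraticChar F
  calc ∑ y : F, χ (y ^ 2 - d) = ∑ a : F, ∑ y ∈ {y : F | y ^ 2 = a}, χ (y ^ 2 - d) :=
        (sum_fiberwise _ _ _).symm
    _ = ∑ a : F, (χ a + 1) * χ (a - d) := by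
        refine sum_congr rfl fun a _ => ?_
        rw [sum_congr rfl fun y hy => by rw [(mem_filter.mp hy).2], sum_const, nsmul_eq_mul,
          ← quadraticChar_card_sqrts hF a, Set.toFinset_ofPred]
    _ = ∑ a : F, χ a * χ (a + -d) + ∑ a : F, χ (a - d) := by
        rw [← sum_add_distrib]
        simp only [add_mul, one_mul, sub_eq_add_neg]
    _ = -1 := by
        rw [quadraticChar_sum_mul_add hF (neg_ne_zero.mpr hd),
          Fintype.sum_equiv (Equiv.subRight d) (fun a => χ (a - d)) χ fun _ => rfl,
          quadraticChar_sum_zero hF, add_zero]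

/-- Completing the square: `4a(ax² + bx + c) = (2ax + b)² - discrim a b c`. -/
lemma quadraticChar_sum_quadratic (hF : ringChar F ≠ 2) {a b c : F} (ha : a ≠ 0)
    (hD : discrim a b c ≠ 0) :
    ∑ x : F, quadraticChar F (a * x ^ 2 + b * x + c) = -quadraticChar F a := by
  set χ := quadraticChar F
  have h2 : (2 : F) ≠ 0 := Ring.two_ne_zero hF
  have hscaled : χ a * ∑ x : F, χ (a * x ^ 2 + b * x + c) = -1 :=
    calc χ a * ∑ x : F, χ (a * x ^ 2 + b * x + c)
        = ∑ x : F, χ ((2 * a * x + b) ^ 2 - discrim a b c) := by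
          rw [mul_sum]
          refine sum_congr rfl fun x _ => ?_
          rw [show (2 * a * x + b) ^ 2 - discrim a b c = 2 ^ 2 * (a * (a * x ^ 2 + b * x + c)) by
            rw [discrim]; ring, map_mul, map_pow, quadraticChar_sq_one h2, one_mul, map_mul]
      _ = ∑ y : F, χ (y ^ 2 - discrim a b c) :=
          Fintype.sum_equiv ((Equiv.mulLeft₀ (2 * a) (mul_ne_zero h2 ha)).trans
            (Equiv.addRight b)) _ _ fun _ => rfl
      _ = -1 := quadraticChar_sum_sq_sub hF hD
  calc ∑ x : F, χ (a * x ^ 2 + b * x + c)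
      = χ a * (χ a * ∑ x : F, χ (a * x ^ 2 + b * x + c)) := by
        rw [← mul_assoc, quadraticChar_mul_self ha, one_mul]
    _ = -χ a := by rw [hscaled, mul_neg_one]

lemma quadraticChar_sum_sq_sub_four_mul (hF : ringChar F ≠ 2) :
    ∑ x : F, quadraticChar F (x ^ 2 - 4 * x) = -1 := by
  have hD : discrim (1 : F) (-4) 0 = 2 ^ 4 := by rw [discrim]; norm_num
  have h := quadraticChar_sum_quadratic hF one_ne_zero
    (hD ▸ pow_ne_zero 4 (Ring.two_ne_zero hF) : discrim (1 : F) (-4) 0 ≠ 0)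
  simpa only [one_mul, neg_mul, add_zero, ← sub_eq_add_neg, map_one] using h

end QuadraticCharSums

section Epsilon

variable (F : Type*) [Field F] [Fintype F] [DecidableEq F]

def epsField (t : F) : ℤ :=
  ∑ x : F, quadraticChar F ((x ^ 2 - 4 * x) * (x ^ 2 - 2 * (t + 1) * x + (t - 1) ^ 2))

variable {F}

lemma sum_epsField (hF : ringChar F ≠ 2) : ∑ t : F, epsField F t = 1 := by
  set χ := quadraticChar F
  have h16 : (16 : F) ≠ 0 := by
    simpa [show (16 : F) = 2 ^ 4 by norm_num] using Ring.two_ne_zero hF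
  have hinner : ∀ x : F, ∑ t : F, χ ((x ^ 2 - 4 * x) * (x ^ 2 - 2 * (t + 1) * x + (t - 1) ^ 2))
      = -χ (x ^ 2 - 4 * x) := by
    intro x
    rcases eq_or_ne x 0 with rfl | hx
    · simp [MulChar.map_zero]
    have hD : discrim 1 (-(2 * (x + 1))) ((x - 1) ^ 2) = 16 * x := by rw [discrim]; ring
    have ht := quadraticChar_sum_quadratic hF one_ne_zero (hD ▸ mul_ne_zero h16 hx)
    rw [map_one] at ht
    calc ∑ t : F, χ ((x ^ 2 - 4 * x) * (x ^ 2 - 2 * (t + 1) * x + (t - 1) ^ 2))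
        = χ (x ^ 2 - 4 * x) * ∑ t : F, χ (1 * t ^ 2 + -(2 * (x + 1)) * t + (x - 1) ^ 2) := by
          rw [mul_sum]
          exact sum_congr rfl fun t _ => by rw [← map_mul]; ring_nf
      _ = -χ (x ^ 2 - 4 * x) := by rw [ht, mul_neg_one]
  unfold epsField
  rw [sum_comm, sum_congr rfl fun x _ => hinner x, sum_neg_distrib,
    quadraticChar_sum_sq_sub_four_mul hF, neg_neg]

lemma epsField_zero (hF : ringChar F ≠ 2) : epsField F 0 = -1 - quadraticChar F (-3) := by
  set χ := quadraticChar F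
  have hterm : ∀ x : F, χ ((x ^ 2 - 4 * x) * (x ^ 2 - 2 * (0 + 1) * x + (0 - 1) ^ 2))
      = χ (x ^ 2 - 4 * x) - if x = 1 then χ (-3) else 0 := by
    intro x
    rcases eq_or_ne x 1 with rfl | hx
    · norm_num [MulChar.map_zero]
    rw [if_neg hx, sub_zero, show x ^ 2 - 2 * (0 + 1) * x + (0 - 1) ^ 2 = (x - 1) ^ 2 by ring,
      map_mul, quadraticChar_sq_one' (sub_ne_zero.mpr hx), mul_one]
  rw [epsField, sum_congr rfl fun x _ => hterm x, sum_sub_distrib,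
    quadraticChar_sum_sq_sub_four_mul hF, sum_ite_eq' univ (1 : F), if_pos (mem_univ _)]

lemma epsField_one (hF : ringChar F ≠ 2) : epsField F 1 = Fintype.card F - 2 := by
  set χ := quadraticChar F
  have h04 : (0 : F) ≠ 4 := by
    simpa [show (4 : F) = 2 ^ 2 by norm_num, eq_comm] using pow_ne_zero 2 (Ring.two_ne_zero hF)
  have hroots : ∀ x : F, x ^ 2 - 4 * x = 0 ↔ x ∈ ({0, 4} : Finset F) := by
    intro x
    rw [show x ^ 2 - 4 * x = x * (x - 4) by ring, mul_eq_zero, sub_eq_zero]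
    simp
  have hterm : ∀ x : F, χ ((x ^ 2 - 4 * x) * (x ^ 2 - 2 * (1 + 1) * x + (1 - 1) ^ 2))
      = 1 - if x ∈ ({0, 4} : Finset F) then 1 else 0 := by
    intro x
    rw [show x ^ 2 - 2 * (1 + 1) * x + (1 - 1) ^ 2 = x ^ 2 - 4 * x by ring, ← pow_two]
    split_ifs with h
    · rw [(hroots x).mpr h]; simp [MulChar.map_zero]
    · rw [quadraticChar_sq_one' ((hroots x).not.mpr h), sub_zero]
  rw [epsField, sum_congr rfl fun x _ => hterm x, sum_sub_distrib, sum_ite_mem, univ_inter,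
    sum_const, sum_const, card_pair h04, card_univ]
  simp

end Epsilon

section ZModReindexing

variable {n : ℕ} [NeZero n] {M : Type*} [AddCommMonoid M]

lemma sum_range_natCast_eq_sum_univ (g : ZMod n → M) :
    ∑ x ∈ range n, g x = ∑ t : ZMod n, g t :=
  sum_nbij' (fun x : ℕ => (x : ZMod n)) ZMod.val (fun _ _ => mem_univ _)
    (fun t _ => mem_range.mpr (ZMod.val_lt t))
    (fun _ hx => ZMod.val_cast_of_lt (mem_range.mp hx)) (fun t _ => ZMod.natCast_zmod_val t)
    (fun _ _ => rfl)

lemma sum_Icc_intCast_eq_sum_sdiff (g : ZMod n → M) :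
    ∑ k ∈ Icc (2 : ℤ) (n - 1), g k = ∑ t ∈ univ \ {0, 1}, g t := by
  have hval : ∀ k ∈ Icc (2 : ℤ) (n - 1), ((k : ZMod n).val : ℤ) = k := by
    intro k hk
    rw [mem_Icc] at hk
    rw [ZMod.val_intCast, Int.emod_eq_of_lt (by omega) (by omega)]
  have hval_ge : ∀ t ∈ (univ \ {0, 1} : Finset (ZMod n)), 2 ≤ t.val := by
    intro t ht
    simp only [mem_sdiff, mem_univ, mem_insert, mem_singleton, true_and, not_or] at ht
    have h0 : t.val ≠ 0 := fun h => ht.1 ((ZMod.val_eq_zero t).mp h)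
    have h1 : t.val ≠ 1 := fun h => ht.2 (by rw [← ZMod.natCast_zmod_val t, h, Nat.cast_one])
    omega
  refine sum_nbij' (fun k : ℤ => (k : ZMod n)) (fun t => (t.val : ℤ)) ?_ ?_ hval ?_
    (fun _ _ => rfl)
  · intro k hk
    have hk' := hval k hk
    rw [mem_Icc] at hk
    simp only [mem_sdiff, mem_univ, mem_insert, mem_singleton, true_and, not_or]
    refine ⟨fun h0 => ?_, fun h1 => ?_⟩
    · rw [h0, ZMod.val_zero] at hk'
      omega
    · rw [h1, ZMod.val_one_eq_one_mod] at hk'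
      have := Nat.mod_le 1 n
      omega
  · intro t ht
    have := hval_ge t ht
    have := ZMod.val_lt t
    rw [mem_Icc]
    omega
  · intro t _
    simp only [Int.cast_natCast, ZMod.natCast_zmod_val]

end ZModReindexing

lemma eps_eq_epsField (p : ℕ) [Fact p.Prime] (k : ℤ) : eps p k = epsField (ZMod p) k := by
  rw [eps, epsField, ← sum_range_natCast_eq_sum_univ]
  refine sum_congr rfl fun x _ => ?_
  rw [legendreSym]
  push_cast
  ring_nf

lemma quadraticChar_neg_three (p : ℕ) [Fact p.Prime] (hp : p ≠ 2) :
    quadraticChar (ZMod p) (-3) = legendreSym 3 p := by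
  have hodd : p % 2 = 1 := (Fact.out : p.Prime).eq_two_or_odd.resolve_left hp
  rw [legendreSym.quadratic_reciprocity' hp (by decide), show (3 : ℕ) / 2 = 1 by rfl, mul_one,
    ← ZMod.χ₄_eq_neg_one_pow hodd, ← legendreSym.at_neg_one hp, ← legendreSym.mul]
  simp [legendreSym]

theorem epsilon_sum (p : ℕ) [Fact p.Prime] (hp : 5 ≤ p) :
    ∑ k ∈ Finset.Icc (2 : ℤ) ((p : ℤ) - 1), eps p k =
      4 + legendreSym 3 p - p := by
  have hp2 : p ≠ 2 := by omega
  have hF : ringChar (ZMod p) ≠ 2 := by rwa [ZMod.ringChar_zmod_n]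
  calc ∑ k ∈ Icc (2 : ℤ) (p - 1), eps p k
      = ∑ t ∈ univ \ {0, 1}, epsField (ZMod p) t := by
        simp only [eps_eq_epsField]
        exact sum_Icc_intCast_eq_sum_sdiff _
    _ = ∑ t, epsField (ZMod p) t - (epsField (ZMod p) 0 + epsField (ZMod p) 1) := by
        rw [sum_sdiff_eq_sub (subset_univ _), sum_pair zero_ne_one]
    _ = 4 + legendreSym 3 p - p := by
        rw [sum_epsField hF, epsField_zero hF, epsField_one hF, ZMod.card,
          quadraticChar_neg_three p hp2]
        ring
end

section
/- Let p be an odd prime and b, c, B, C integers with D = B^2 - 4C, d = b^2 - 4c, δ = 4C - 2bB + 4c. If B - b ≢ 0 (mod p) and the polynomials x^2 + bx + c and x^2 + Bx + C have no common root mod p, then ∑_{x=0}^{p-1} ((x^2+bx+c)(x^2+Bx+C)/p) = -1 + ∑_{x=0}^{p-1} (x(Dx^2 + δx + d)/p). -/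
/-!
Since `χ(f g) = χ(g / f)`, the left-hand sum counts each value `t` of `g / f` with weight `χ t`
times the number of roots of `g - t f`. For `t ≠ 1` this is a quadratic with discriminant
`d t² + δ t + D`, so it has `1 + χ(d t² + δ t + D)` roots; for `t = 1` it is linear with one root.
Summing, `∑ χ t = 0` leaves `-1 + ∑ χ(t (d t² + δ t + D))`, and `t ↦ t⁻¹` reverses the cubic.
-/

open Finset

section FiniteField

variable {F : Type*} [Field F] [Fintype F] [DecidableEq F]

-- Also at `a = 0`, where `b / 0 = 0`.
lemma quadraticChar_mul_eq_div (a b : F) : quadraticChar F (a * b) = quadraticChar F (b / a) := by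
  rcases eq_or_ne a 0 with rfl | ha
  · simp
  · rw [show a * b = a ^ 2 * (b / a) by field_simp, map_mul, quadraticChar_sq_one' ha, one_mul]

lemma card_filter_quadratic_eq_zero (hF : ringChar F ≠ 2) {a : F} (ha : a ≠ 0) (b c : F) :
    (#{x | a * x ^ 2 + b * x + c = 0} : ℤ) = quadraticChar F (b ^ 2 - 4 * a * c) + 1 := by
  have h2 : (2 : F) ≠ 0 := Ring.two_ne_zero hF
  rw [← quadraticChar_card_sqrts hF, Set.toFinset_ofPred]
  congr 1
  -- completing the square: `a x² + b x + c = 0 ↔ (2 a x + b)² = b² - 4 a c`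
  refine card_nbij' (fun x ↦ 2 * a * x + b) (fun y ↦ (y - b) / (2 * a)) ?_ ?_ ?_ ?_
  · intro x hx
    simp only [coe_filter, mem_univ, true_and, Set.mem_ofPred_eq] at hx ⊢
    linear_combination (4 * a) * hx
  · intro y hy
    simp only [coe_filter, mem_univ, true_and, Set.mem_ofPred_eq] at hy ⊢
    field_simp
    linear_combination hy
  · intro x _
    field_simp
    ring
  · intro y _
    field_simp
    ring

lemma sum_quadraticChar_mul_eq_sum_card_mul {f g : F → F} (hfg : ∀ x, ¬(f x = 0 ∧ g x = 0)) :
    ∑ x, quadraticChar F (f x * g x) = ∑ t, (#{x | g x = t * f x} : ℤ) * quadraticChar F t := by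
  simp_rw [quadraticChar_mul_eq_div]
  rw [← sum_fiberwise' univ (fun x ↦ g x / f x) (quadraticChar F)]
  refine sum_congr rfl fun t _ ↦ ?_
  rw [sum_const, nsmul_eq_mul]
  rcases eq_or_ne t 0 with rfl | ht
  · simp
  congr 3
  ext x
  simp only [mem_filter, mem_univ, true_and]
  constructor
  · intro h
    have hf : f x ≠ 0 := fun hf ↦ ht (by simp [← h, hf])
    rw [← h, div_mul_cancel₀ _ hf]
  · intro h
    have hf : f x ≠ 0 := fun hf ↦ hfg x ⟨hf, by simp [h, hf]⟩
    rw [h, mul_div_cancel_right₀ _ hf]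

lemma card_filter_monic_quadratic_eq_mul (hF : ringChar F ≠ 2) {b c B C : F} (hBb : B ≠ b)
    (t : F) :
    (#{x | x ^ 2 + B * x + C = t * (x ^ 2 + b * x + c)} : ℤ) =
      quadraticChar F ((B - t * b) ^ 2 - 4 * (1 - t) * (C - t * c)) + 1 -
        if t = 1 then 1 else 0 := by
  rcases eq_or_ne t 1 with rfl | ht
  · have hroot : ∀ x, x ^ 2 + B * x + C = x ^ 2 + b * x + c ↔ x = (c - C) / (B - b) := by
      intro x
      rw [eq_div_iff (sub_ne_zero.mpr hBb)]
      constructor <;> intro h <;> linear_combination h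
    rw [show (B - 1 * b) ^ 2 - 4 * (1 - 1) * (C - 1 * c) = (B - b) ^ 2 by ring,
      quadraticChar_sq_one' (sub_ne_zero.mpr hBb), if_pos rfl, add_sub_cancel_right]
    simp only [one_mul, hroot, filter_eq', mem_univ, if_true, card_singleton, Nat.cast_one]
  · have hroot : ∀ x, x ^ 2 + B * x + C = t * (x ^ 2 + b * x + c) ↔
        (1 - t) * x ^ 2 + (B - t * b) * x + (C - t * c) = 0 := by
      intro x
      constructor <;> intro h <;> linear_combination h
    simp only [hroot, card_filter_quadratic_eq_zero hF (sub_ne_zero.mpr ht.symm), ht, if_false,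
      sub_zero]

lemma sum_quadraticChar_mul_quadratic_reverse (a b c : F) :
    ∑ x, quadraticChar F (x * (a * x ^ 2 + b * x + c)) =
      ∑ x, quadraticChar F (x * (c * x ^ 2 + b * x + a)) := by
  refine Fintype.sum_bijective (·⁻¹) inv_involutive.bijective _ _ fun x ↦ ?_
  rcases eq_or_ne x 0 with rfl | hx
  · simp
  rw [show x * (a * x ^ 2 + b * x + c) = (x ^ 2) ^ 2 * (x⁻¹ * (c * x⁻¹ ^ 2 + b * x⁻¹ + a)) by
      field_simp; ring,
    map_mul, quadraticChar_sq_one' (pow_ne_zero 2 hx), one_mul]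

theorem sum_quadraticChar_mul_monic_quadratics (hF : ringChar F ≠ 2) {b c B C : F} (hBb : B ≠ b)
    (hroots : ∀ x : F, ¬(x ^ 2 + b * x + c = 0 ∧ x ^ 2 + B * x + C = 0)) :
    ∑ x, quadraticChar F ((x ^ 2 + b * x + c) * (x ^ 2 + B * x + C)) =
      -1 + ∑ x, quadraticChar F (x * ((B ^ 2 - 4 * C) * x ^ 2 +
        (4 * C - 2 * b * B + 4 * c) * x + (b ^ 2 - 4 * c))) := by
  have hfiber : ∀ t, (#{x | x ^ 2 + B * x + C = t * (x ^ 2 + b * x + c)} : ℤ) *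
      quadraticChar F t = quadraticChar F (t * ((b ^ 2 - 4 * c) * t ^ 2 +
        (4 * C - 2 * b * B + 4 * c) * t + (B ^ 2 - 4 * C))) + quadraticChar F t -
          if t = 1 then 1 else 0 := by
    intro t
    rw [card_filter_monic_quadratic_eq_mul hF hBb, sub_mul, add_mul, one_mul, ← map_mul, ite_mul,
      one_mul, zero_mul]
    split_ifs with ht
    · rw [ht, map_one]
      ring_nf
    · ring_nf
  rw [sum_quadraticChar_mul_eq_sum_card_mul hroots, ← sum_quadraticChar_mul_quadratic_reverse,
    sum_congr rfl fun t _ ↦ hfiber t, sum_sub_distrib, sum_add_distrib, sum_ite_eq',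
    quadraticChar_sum_zero hF, add_zero, if_pos (mem_univ _), sub_eq_neg_add]

end FiniteField

lemma sum_univ_zmod_eq_sum_range {M : Type*} [AddCommMonoid M] (n : ℕ) [NeZero n]
    (G : ZMod n → M) : ∑ x, G x = ∑ i ∈ range n, G i :=
  sum_nbij' (·.val) (↑) (fun x _ ↦ mem_range.mpr x.val_lt) (fun _ _ ↦ mem_univ _)
    (fun x _ ↦ ZMod.natCast_zmod_val x) (fun _ hi ↦ ZMod.val_cast_of_lt (mem_range.mp hi))
    (fun x _ ↦ by rw [ZMod.natCast_zmod_val])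

theorem williams_transform (p : ℕ) [Fact p.Prime] (hodd : Odd p)
    (b c B C : ℤ)
    (hBb : ¬ (p : ℤ) ∣ (B - b))
    (hroots : ∀ x : ZMod p,
      ¬ (x ^ 2 + (b : ZMod p) * x + (c : ZMod p) = 0 ∧
         x ^ 2 + (B : ZMod p) * x + (C : ZMod p) = 0)) :
    ∑ x ∈ Finset.range p,
      legendreSym p (((x : ℤ) ^ 2 + b * x + c) * ((x : ℤ) ^ 2 + B * x + C)) =
    -1 + ∑ x ∈ Finset.range p,
      legendreSym p ((x : ℤ) * ((B ^ 2 - 4 * C) * x ^ 2 +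
        (4 * C - 2 * b * B + 4 * c) * x + (b ^ 2 - 4 * c))) := by
  have hF : ringChar (ZMod p) ≠ 2 := by
    rw [ZMod.ringChar_zmod_n]
    rintro rfl
    exact absurd hodd (by decide)
  have hBb' : (B : ZMod p) ≠ b := by
    rwa [Ne, ← sub_eq_zero, ← Int.cast_sub, ZMod.intCast_zmod_eq_zero_iff_dvd]
  have h := sum_quadraticChar_mul_monic_quadratics hF hBb' hroots
  rw [sum_univ_zmod_eq_sum_range, sum_univ_zmod_eq_sum_range] at h
  simp only [legendreSym]
  push_cast
  exact h
end

section
/- Let p be an odd prime and for 1 ≤ i, j ≤ p-1 let t_{i,j} be the number of pairs (x,y) in F_p^× × F_p^× with x + y = 1 and x^{-1} + i y^{-1} = j. Then t_{i,j} = 1 + (f_j(i)/p) where f_j(x) = x^2 - 2(j+1)x + (j-1)^2 and (·/p) is the Legendre symbol. -/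
/-!
A solution is determined by `x`, since `y = 1 - x`. Clearing denominators in
`x⁻¹ + i (1 - x)⁻¹ = j` turns the system into the quadratic `j x² + (i - 1 - j) x + 1 = 0`,
whose roots are automatically different from `0`, and different from `1` because `i ≠ 0`.
Its discriminant `(i - 1 - j)² - 4j` is `f_j(i)`, and in odd characteristic a quadratic with
nonzero leading coefficient has `1 + χ(disc)` roots, `χ` the quadratic character: completing
the square matches its roots with the square roots of the discriminant.
-/

open Finset

section QuadraticCount

variable {F : Type*} [Field F] [Fintype F] [DecidableEq F]

theorem card_roots_quadratic_eq_card_sqrts_discrim (hF : ringChar F ≠ 2) {a : F} (ha : a ≠ 0)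
    (b c : F) : #{x : F | a * x ^ 2 + b * x + c = 0} = #{y : F | y ^ 2 = discrim a b c} := by
  have h2 : (2 : F) ≠ 0 := Ring.two_ne_zero hF
  refine card_bij' (fun x _ ↦ 2 * a * x + b) (fun y _ ↦ (y - b) / (2 * a)) ?_ ?_ ?_ ?_
  · intro x hx
    rw [mem_filter_univ] at hx ⊢
    rw [discrim]
    linear_combination 4 * a * hx
  · intro y hy
    rw [mem_filter_univ, discrim] at hy
    rw [mem_filter_univ]
    field_simp
    linear_combination hy
  · intro x _
    field_simp
    ring
  · intro y _
    field_simp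
    ring

theorem card_roots_quadratic_eq_quadraticChar_discrim_add_one (hF : ringChar F ≠ 2) {a : F}
    (ha : a ≠ 0) (b c : F) :
    (#{x : F | a * x ^ 2 + b * x + c = 0} : ℤ) = quadraticChar F (discrim a b c) + 1 := by
  rw [card_roots_quadratic_eq_card_sqrts_discrim hF ha, ← quadraticChar_card_sqrts hF,
    Set.toFinset_ofPred]

theorem card_unit_solutions_eq_card_roots_quadratic {a : F} (ha : a ≠ 0) (b : F) :
    #{q : Fˣ × Fˣ | (q.1 : F) + q.2 = 1 ∧ ((q.1⁻¹ : Fˣ) : F) + a * ((q.2⁻¹ : Fˣ) : F) = b}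
      = #{x : F | b * x ^ 2 + (a - 1 - b) * x + 1 = 0} := by
  refine card_bij (fun q _ ↦ (q.1 : F)) ?_ ?_ ?_
  · rintro ⟨u, v⟩ hq
    rw [mem_filter_univ] at hq ⊢
    simp only [Units.val_inv_eq_inv_val] at hq
    obtain ⟨hsum, hinv⟩ := hq
    field_simp at hinv
    linear_combination hinv + (b * (u : F) - 1) * hsum
  · rintro ⟨u, v⟩ hq ⟨u', v'⟩ hq' (huu' : (u : F) = u')
    rw [mem_filter_univ] at hq hq'
    exact Prod.ext (Units.ext huu') (Units.ext (by linear_combination hq.1 - hq'.1 - huu'))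
  · intro x hx
    rw [mem_filter_univ] at hx
    have hx0 : x ≠ 0 := by rintro rfl; simp at hx
    have hx1 : 1 - x ≠ 0 := by
      intro h
      obtain rfl : x = 1 := by linear_combination -h
      exact ha (by linear_combination hx)
    refine ⟨(Units.mk0 x hx0, Units.mk0 (1 - x) hx1), ?_, rfl⟩
    simp only [mem_filter_univ, Units.val_inv_eq_inv_val, Units.val_mk0, add_sub_cancel, true_and]
    field_simp
    linear_combination hx

end QuadraticCount

theorem ZMod.natCast_ne_zero_of_pos_of_lt {p n : ℕ} (hn : 0 < n) (hnp : n < p) :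
    (n : ZMod p) ≠ 0 := by
  rw [Ne, ZMod.natCast_eq_zero_iff]
  exact fun h ↦ hn.ne' (Nat.eq_zero_of_dvd_of_lt h hnp)

theorem tij_count (p : ℕ) [Fact p.Prime] (hodd : Odd p) (i j : ℕ)
    (hi : 1 ≤ i ∧ i ≤ p - 1) (hj : 1 ≤ j ∧ j ≤ p - 1) :
    ((Finset.univ.filter (fun q : (ZMod p)ˣ × (ZMod p)ˣ =>
        (q.1 : ZMod p) + (q.2 : ZMod p) = 1 ∧
        ((q.1⁻¹ : (ZMod p)ˣ) : ZMod p) + (i : ZMod p) * ((q.2⁻¹ : (ZMod p)ˣ) : ZMod p)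
          = (j : ZMod p))).card : ℤ) =
      1 + legendreSym p ((i : ℤ) ^ 2 - 2 * ((j : ℤ) + 1) * i + ((j : ℤ) - 1) ^ 2) := by
  have hp := (Fact.out : p.Prime).pos
  have hchar : ringChar (ZMod p) ≠ 2 := by
    rw [ZMod.ringChar_zmod_n]
    rintro rfl
    exact Nat.not_odd_iff_even.mpr even_two hodd
  have hi0 : (i : ZMod p) ≠ 0 := ZMod.natCast_ne_zero_of_pos_of_lt hi.1 (by omega)
  have hj0 : (j : ZMod p) ≠ 0 := ZMod.natCast_ne_zero_of_pos_of_lt hj.1 (by omega)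
  rw [card_unit_solutions_eq_card_roots_quadratic hi0,
    card_roots_quadratic_eq_quadraticChar_discrim_add_one hchar hj0, legendreSym, add_comm]
  congr 2
  rw [discrim]
  push_cast
  ring
end
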